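/- Invariance of the steady-state edge force under hidden time reversal (Theorem 'sameforce'): Assume in addition that the kernels of W and of W̃ (as linear maps v ↦ W *ᵥ v and v ↦ W̃ *ᵥ v) are both one-dimensional. If r : Fin n → ℝ is strictly positive with W *ᵥ r = 0 and r̃ : Fin n → ℝ is strictly positive with W̃ *ᵥ r̃ = 0, then r a * r̃ b = r b * r̃ a (the steady-state population ratio across the observable edge, hence the steady-state edge force log(W a b · r b / (W b a · r a)), is the same for the forward and the hidden time-reversal dynamics). -/

import Mathlib

/-!
Let `s i = r̃ i / p i`. Since `W̃ = P (M Q)ᵀ P⁻¹`, the vector `s` is a left null vector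
of `M Q`, while `r` is a right null vector of `W`. As `M Q - W` is supported on the two
entries of the observable edge, pairing gives
`s a (M Q a b - W a b) r b + s b (M Q b a - W b a) r a = 0`, and the choice of `Q` turns this
into `(W a b p b - W b a p a) (r a r̃ b - r b r̃ a) = 0`.
If the first factor vanishes (detailed balance across the edge), then `Q = 0` and `M Q = W`; the
marginal generator then annihilates `p`, so `W p = 0`, and since the columns of `W` sum to zero,
also `W̃ p = 0`. Both kernels being lines, `r` and `r̃` are multiples of `p`.
-/

open Matrix Real

namespace Matrix

variable {ι K : Type*} [Fintype ι] [DecidableEq ι] [Field K]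

theorem diagonal_mul_transpose_mul_inv_mulVec_eq_zero_iff {p : ι → K} (hp : ∀ i, p i ≠ 0)
    (A : Matrix ι ι K) (v : ι → K) :
    (diagonal p * Aᵀ * (diagonal p)⁻¹) *ᵥ v = 0 ↔ (fun i => v i / p i) ᵥ* A = 0 := by
  have hinv : (diagonal p)⁻¹ = diagonal fun i => (p i)⁻¹ :=
    inv_eq_right_inv (by simp [diagonal_mul_diagonal, hp])
  have hv : (diagonal fun i => (p i)⁻¹) *ᵥ v = fun i => v i / p i := by
    ext i
    rw [mulVec_diagonal, div_eq_inv_mul]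
  rw [hinv, ← mulVec_mulVec, ← mulVec_mulVec, hv, mulVec_transpose]
  constructor
  · intro h
    ext j
    simpa [mulVec_diagonal, hp j] using congrFun h j
  · intro h
    rw [h, mulVec_zero]

omit [Fintype ι] in
theorem sub_eq_single_add_single {A B : Matrix ι ι K} {a b : ι} (hab : a ≠ b)
    (h : ∀ i j, ¬(i = a ∧ j = b) → ¬(i = b ∧ j = a) → A i j = B i j) :
    A - B = single a b (A a b - B a b) + single b a (A b a - B b a) := by
  ext i j
  by_cases hab' : i = a ∧ j = b
  · obtain ⟨rfl, rfl⟩ := hab'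
    simp [hab.symm]
  by_cases hba : i = b ∧ j = a
  · obtain ⟨rfl, rfl⟩ := hba
    simp [hab]
  simp only [sub_apply, add_apply, single_apply, h i j hab' hba, sub_self]
  grind

theorem dotProduct_single_add_single_mulVec (a b : ι) (x y : K) (s r : ι → K) :
    s ⬝ᵥ ((single a b x + single b a y) *ᵥ r) = s a * x * r b + s b * y * r a := by
  simp only [add_mulVec, single_mulVec_eq, dotProduct_add, dotProduct_smul, dotProduct_single,
    smul_eq_mul]
  ring

omit [DecidableEq ι] in
theorem dotProduct_sub_mulVec_eq_zero {A B : Matrix ι ι K} {r s : ι → K} (hr : A *ᵥ r = 0)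
    (hs : s ᵥ* B = 0) : s ⬝ᵥ ((B - A) *ᵥ r) = 0 := by
  rw [sub_mulVec, dotProduct_sub, dotProduct_mulVec, hs, hr, zero_dotProduct, dotProduct_zero,
    sub_zero]

/-- Generator of the single edge `a ↔ b`: rate `x` for the jump `b → a`, rate `y` for `a → b`
(column = source state). -/
def edgeGenerator (a b : ι) (x y : K) : Matrix ι ι K :=
  single a b x + single b a y - single a a y - single b b x

theorem edgeGenerator_mulVec (a b : ι) (x y : K) (p : ι → K) :
    edgeGenerator a b x y *ᵥ p = (x * p b - y * p a) • (Pi.single a 1 - Pi.single b 1) := by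
  simp only [edgeGenerator, sub_mulVec, add_mulVec, single_mulVec_eq]
  module

omit [Fintype ι] in
theorem sub_eq_edgeGenerator {W H : Matrix ι ι K} {a b : ι} (hab : a ≠ b)
    (hab0 : H a b = 0) (hba0 : H b a = 0)
    (haa : H a a = W a a + W b a) (hbb : H b b = W b b + W a b)
    (h : ∀ i j, ¬(i = a ∧ j = b) → ¬(i = b ∧ j = a) → ¬(i = a ∧ j = a) →
      ¬(i = b ∧ j = b) → H i j = W i j) :
    W - H = edgeGenerator a b (W a b) (W b a) := by
  ext i j
  by_cases hi : i = a ∨ i = b <;> by_cases hj : j = a ∨ j = b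
  · rcases hi with rfl | rfl <;> rcases hj with rfl | rfl <;>
      simp [edgeGenerator, hab.symm, *]
  all_goals
    simp only [edgeGenerator, sub_apply, add_apply, single_apply,
      h i j (by grind) (by grind) (by grind) (by grind)]
    grind

theorem mulVec_eq_zero_of_detailed_balance {W H : Matrix ι ι K} {a b : ι} {p : ι → K}
    (hWH : W - H = edgeGenerator a b (W a b) (W b a)) (hp : H *ᵥ p = 0)
    (hdb : W a b * p b = W b a * p a) : W *ᵥ p = 0 := by
  rw [← sub_add_cancel W H, add_mulVec, hp, add_zero, hWH, edgeGenerator_mulVec, hdb, sub_self,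
    zero_smul]

omit [DecidableEq ι] in
theorem vecMul_const_one_eq_zero {A : Matrix ι ι K} (hA : ∀ j, ∑ i, A i j = 0) :
    (fun _ => 1) ᵥ* A = 0 := by
  ext j
  simp [vecMul, dotProduct, hA j]

omit [DecidableEq ι] in
theorem exists_smul_eq_of_finrank_ker_eq_one {A : Matrix ι ι K}
    (hA : Module.finrank K (LinearMap.ker A.mulVecLin) = 1) {u v : ι → K}
    (hu : A *ᵥ u = 0) (hu0 : u ≠ 0) (hv : A *ᵥ v = 0) : ∃ c : K, c • u = v := by
  have hv' : v ∈ LinearMap.ker A.mulVecLin := hv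
  rw [eq_span_singleton_of_mem_of_finrank_eq_one hA (w := u) hu hu0] at hv'
  exact Submodule.mem_span_singleton.1 hv'

omit [DecidableEq ι] in
theorem mul_eq_mul_of_finrank_ker_eq_one {A B : Matrix ι ι K}
    (hA : Module.finrank K (LinearMap.ker A.mulVecLin) = 1)
    (hB : Module.finrank K (LinearMap.ker B.mulVecLin) = 1) {p r t : ι → K}
    (hpA : A *ᵥ p = 0) (hpB : B *ᵥ p = 0) (hp : p ≠ 0) (hr : A *ᵥ r = 0) (ht : B *ᵥ t = 0)
    (i j : ι) : r i * t j = r j * t i := by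
  obtain ⟨c, rfl⟩ := exists_smul_eq_of_finrank_ker_eq_one hA hpA hp hr
  obtain ⟨d, rfl⟩ := exists_smul_eq_of_finrank_ker_eq_one hB hpB hp ht
  simp only [Pi.smul_apply, smul_eq_mul]
  ring

end Matrix

theorem mul_sub_mul_eq_zero_of_exp_eq_affinity {x y pa pb ra rb sa sb Q : ℝ}
    (hQ : exp Q = x * pb / (y * pa))
    (h : sa * (x * (exp (-Q) - 1)) * rb + sb * (y * (exp Q - 1)) * ra = 0) :
    (x * pb - y * pa) * (ra * (sb * pb) - rb * (sa * pa)) = 0 := by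
  have hne : x * pb / (y * pa) ≠ 0 := hQ ▸ exp_ne_zero Q
  simp only [ne_eq, div_eq_zero_iff, mul_eq_zero, not_or] at hne
  obtain ⟨⟨hx, hpb⟩, hy, hpa⟩ := hne
  rw [exp_neg, hQ, inv_div] at h
  field_simp at h
  linear_combination h

theorem same_edge_force {n : ℕ}
    (W Whid : Matrix (Fin n) (Fin n) ℝ)
    (hW2 : ∀ j, ∑ i, W i j = 0)
    (a b : Fin n) (hab : a ≠ b)
    (hWab : 0 < W a b) (hWba : 0 < W b a)
    (hH1 : Whid a b = 0) (hH2 : Whid b a = 0)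
    (hH3 : Whid a a = W a a + W b a)
    (hH4 : Whid b b = W b b + W a b)
    (hH5 : ∀ i j, ¬(i = a ∧ j = b) → ¬(i = b ∧ j = a) → ¬(i = a ∧ j = a) →
      ¬(i = b ∧ j = b) → Whid i j = W i j)
    (p : Fin n → ℝ) (hp1 : ∀ i, 0 < p i)
    (hp3 : Whid *ᵥ p = 0)
    (Q : ℝ) (hQdef : Q = Real.log (W a b * p b / (W b a * p a)))
    (M : ℝ → Matrix (Fin n) (Fin n) ℝ)
    (hM1 : ∀ q, M q a b = W a b * Real.exp (-q))
    (hM2 : ∀ q, M q b a = W b a * Real.exp q)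
    (hM3 : ∀ q i j, ¬(i = a ∧ j = b) → ¬(i = b ∧ j = a) → M q i j = W i j)
    (Wt : Matrix (Fin n) (Fin n) ℝ)
    (hWt : Wt = Matrix.diagonal p * (M Q)ᵀ * (Matrix.diagonal p)⁻¹)
    (hkerW : Module.finrank ℝ (LinearMap.ker W.mulVecLin) = 1)
    (hkerWt : Module.finrank ℝ (LinearMap.ker Wt.mulVecLin) = 1)
    (r : Fin n → ℝ) (hr2 : W *ᵥ r = 0)
    (rt : Fin n → ℝ) (hrt2 : Wt *ᵥ rt = 0) :
    r a * rt b = r b * rt a := by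
  have hp0 : ∀ i, p i ≠ 0 := fun i => (hp1 i).ne'
  have hexpQ : exp Q = W a b * p b / (W b a * p a) := by
    rw [hQdef, exp_log (div_pos (mul_pos hWab (hp1 b)) (mul_pos hWba (hp1 a)))]
  have hMW :
      M Q - W = single a b (W a b * (exp (-Q) - 1)) + single b a (W b a * (exp Q - 1)) := by
    rw [sub_eq_single_add_single hab (hM3 Q), hM1, hM2]
    ring_nf
  have hs : (fun i => rt i / p i) ᵥ* M Q = 0 := by
    rwa [hWt, diagonal_mul_transpose_mul_inv_mulVec_eq_zero_iff hp0] at hrt2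
  have hpair := dotProduct_sub_mulVec_eq_zero hr2 hs
  rw [hMW, dotProduct_single_add_single_mulVec] at hpair
  have hkey := mul_sub_mul_eq_zero_of_exp_eq_affinity hexpQ hpair
  simp only [div_mul_cancel₀ _ (hp0 _)] at hkey
  rcases mul_eq_zero.1 hkey with hdb | hkey
  · have hQ0 : Q = 0 := by
      rwa [sub_eq_zero.1 hdb, div_self (mul_pos hWba (hp1 a)).ne', exp_eq_one_iff] at hexpQ
    have hMQ : M Q = W := sub_eq_zero.1 (by rw [hMW, hQ0]; simp)
    have hWtp : Wt *ᵥ p = 0 := by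
      rw [hWt, diagonal_mul_transpose_mul_inv_mulVec_eq_zero_iff hp0, hMQ]
      simpa [hp0] using vecMul_const_one_eq_zero hW2
    have hWp : W *ᵥ p = 0 := mulVec_eq_zero_of_detailed_balance
      (sub_eq_edgeGenerator hab hH1 hH2 hH3 hH4 hH5) hp3 (sub_eq_zero.1 hdb)
    exact mul_eq_mul_of_finrank_ker_eq_one hkerW hkerWt hWp hWtp
      (fun h => hp0 a (congrFun h a)) hr2 hrt2 a b
  · linear_combination hkey
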